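/- arXiv:2509.11951 — 2 statements merged into one kernel-verified Lean document; each statement's English description precedes it below -/
import Mathlib

section
/- Let s > 0 and let p be a non-negative integer with p ≤ s ≤ p + 2. Then for every α > 0, the supremum over ξ ∈ ℝ of (1 - e^{-αξ²})² ξ^{2p} / (1 + ξ²)^s is at most α^{s-p}. -/
open Real

/-- Key pointwise bound: for `t > 0` and `0 ≤ θ ≤ 2`, `(1 - e^{-t})² ≤ t^θ`. -/
lemma aux_exp_bound (t θ : ℝ) (ht : 0 < t) (hθ0 : 0 ≤ θ) (hθ2 : θ ≤ 2) :
    (1 - Real.exp (-t)) ^ 2 ≤ t ^ θ := by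
  have h0 : 0 ≤ 1 - Real.exp (-t) := by
    have : Real.exp (-t) ≤ 1 := by
      rw [Real.exp_le_one_iff]; linarith
    linarith
  rcases le_or_gt t 1 with h1 | h1
  · have hle : 1 - Real.exp (-t) ≤ t := by
      have := Real.add_one_le_exp (-t)
      linarith
    calc (1 - Real.exp (-t)) ^ 2 ≤ t ^ 2 := by
          apply pow_le_pow_left₀ h0 hle
      _ = t ^ (2 : ℝ) := by rw [← Real.rpow_natCast t 2]; norm_num
      _ ≤ t ^ θ := Real.rpow_le_rpow_of_exponent_ge ht h1 hθ2
  · have hle : 1 - Real.exp (-t) ≤ 1 := by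
      have := Real.exp_pos (-t); linarith
    calc (1 - Real.exp (-t)) ^ 2 ≤ 1 ^ 2 := pow_le_pow_left₀ h0 hle 2
      _ = 1 := one_pow 2
      _ ≤ t ^ θ := Real.one_le_rpow h1.le hθ0

/-- Let `s > 0` and `p` a non-negative integer with `p ≤ s ≤ p + 2`. Then for
every `α > 0`, the supremum over `ξ ∈ ℝ` of `(1 - e^{-αξ²})² ξ^{2p} / (1 + ξ²)^s` is at most
`α^(s-p)`. -/
theorem stmt1 (s : ℝ) (hs : 0 < s) (p : ℕ) (hps : (p : ℝ) ≤ s) (hsp : s ≤ (p : ℝ) + 2)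
    (α : ℝ) (hα : 0 < α) :
    (⨆ ξ : ℝ, (1 - Real.exp (-α * ξ ^ 2)) ^ 2 * ξ ^ (2 * p) / (1 + ξ ^ 2) ^ s)
      ≤ α ^ (s - (p : ℝ)) := by
  have hαsp : 0 ≤ α ^ (s - (p : ℝ)) := (Real.rpow_pos_of_pos hα _).le
  apply ciSup_le
  intro ξ
  rcases eq_or_ne ξ 0 with rfl | hξ
  · simp [hαsp]
  · have hx : 0 < ξ ^ 2 := by positivity
    have hden : (0:ℝ) < (1 + ξ ^ 2) ^ s := Real.rpow_pos_of_pos (by positivity) s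
    rw [div_le_iff₀ hden]
    have hθ0 : 0 ≤ s - (p : ℝ) := by linarith
    have hθ2 : s - (p : ℝ) ≤ 2 := by linarith
    have key : (1 - Real.exp (-α * ξ ^ 2)) ^ 2 ≤ (α * ξ ^ 2) ^ (s - (p : ℝ)) := by
      have := aux_exp_bound (α * ξ ^ 2) (s - (p : ℝ)) (by positivity) hθ0 hθ2
      rwa [← neg_mul] at this
    have h1 : (1 - Real.exp (-α * ξ ^ 2)) ^ 2 * ξ ^ (2 * p)
        ≤ (α * ξ ^ 2) ^ (s - (p : ℝ)) * ξ ^ (2 * p) := by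
      apply mul_le_mul_of_nonneg_right key (by rw [pow_mul]; positivity)
    refine h1.trans ?_
    have hxp : (ξ : ℝ) ^ (2 * p) = (ξ ^ 2) ^ ((p : ℝ)) := by
      rw [pow_mul, ← Real.rpow_natCast (ξ ^ 2) p]
    rw [hxp, Real.mul_rpow hα.le hx.le, mul_assoc,
        ← Real.rpow_add hx]
    have : s - (p : ℝ) + (p : ℝ) = s := by ring
    rw [this]
    apply mul_le_mul_of_nonneg_left _ hαsp
    exact Real.rpow_le_rpow hx.le (by linarith) hs.le
end

section
/- Let G : ℝⁿ × ℝ → ℝ be Lipschitz with compact support, with Lipschitz constant ‖G‖_Lip. Fix t₀ ∈ ℝ and τ > 0. Then there exists a constant C > 0 depending only on the support of G such that for all θ ∈ S^{n-1} and η ∈ ℝ, |𝓡(G)(t₀, θ, η) − (τ/π) ∫_ℝ ∫_{ℝⁿ} G(x,t) e^{−τ((x·θ − η)² + (t−t₀)²)} dx dt| ≤ (√π/2) · C · ‖G‖_Lip · τ^{−1/2}. In particular the Gaussian-weighted integral converges to 𝓡(G)(t₀, θ, η) uniformly in (θ, η) as τ → ∞. -/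
open MeasureTheory Real Filter
open scoped RealInnerProductSpace

open MeasureTheory Real Filter

lemma gauss_Ioi {b : ℝ} (hb : 0 < b) :
    ∫ x in Set.Ioi (0:ℝ), x * exp (-b * x ^ 2) = (2*b)⁻¹ := by
  have hderiv : ∀ x ∈ Set.Ici (0:ℝ),
      HasDerivAt (fun x : ℝ => -(2*b)⁻¹ * exp (-b*x^2)) (x * exp (-b * x ^ 2)) x := by
    intro x _
    have h1 : HasDerivAt (fun x : ℝ => -b*x^2) (-b*(2*x)) x := by
      simpa using ((hasDerivAt_pow 2 x).const_mul (-b))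
    have h2 := (h1.exp).const_mul (-(2*b)⁻¹)
    refine h2.congr_deriv ?_
    field_simp
  have htend : Tendsto (fun x : ℝ => -(2*b)⁻¹ * exp (-b*x^2)) atTop (nhds 0) := by
    have h1 : Tendsto (fun x : ℝ => -b*x^2) atTop atBot := by
      have := (tendsto_pow_atTop (n := 2) (by norm_num)).const_mul_atTop hb
      simpa [neg_mul, Function.comp_def] using tendsto_neg_atTop_atBot.comp this
    have := (Real.tendsto_exp_atBot).comp h1
    simpa using (this.const_mul (-(2*b)⁻¹))
  have := integral_Ioi_of_hasDerivAt_of_tendsto' hderiv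
    (integrable_mul_exp_neg_mul_sq hb).integrableOn htend
  rw [this]
  norm_num

lemma gauss_abs {b : ℝ} (hb : 0 < b) :
    ∫ x : ℝ, |x| * exp (-b * x ^ 2) = b⁻¹ := by
  have : (fun x : ℝ => |x| * exp (-b*x^2)) = fun x => (fun r => r * exp (-b * r^2)) |x| := by
    funext x; simp [sq_abs]
  rw [this, integral_comp_abs (f := fun r : ℝ => r * exp (-b * r^2)), gauss_Ioi hb]
  rw [mul_inv]
  ring

lemma gauss_abs_integrable {b : ℝ} (hb : 0 < b) :
    Integrable fun x : ℝ => |x| * exp (-b * x ^ 2) := by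
  have := (integrable_mul_exp_neg_mul_sq hb).abs
  refine this.congr ?_
  filter_upwards with x
  rw [abs_mul, abs_of_pos (exp_pos _)]
open MeasureTheory Real

section mp
variable (α β : Type*) [NormedAddCommGroup α] [InnerProductSpace ℝ α] [FiniteDimensional ℝ α]
  [MeasurableSpace α] [BorelSpace α]
  [NormedAddCommGroup β] [InnerProductSpace ℝ β] [FiniteDimensional ℝ β]
  [MeasurableSpace β] [BorelSpace β]
  [MeasurableSpace (WithLp 2 (α × β))] [BorelSpace (WithLp 2 (α × β))]

lemma mp_withLp_symm :
    MeasurePreserving ((WithLp.equiv 2 (α × β)).symm) volume volume := by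
  haveI : FiniteDimensional ℝ (WithLp 2 (α × β)) :=
    (WithLp.linearEquiv 2 ℝ (α × β)).symm.finiteDimensional
  set L := WithLp.prodContinuousLinearEquiv 2 ℝ α β with hL
  have hmeas : Measurable ((WithLp.equiv 2 (α × β)).symm : α × β → WithLp 2 (α × β)) :=
    L.symm.continuous.measurable
  refine ⟨hmeas, ?_⟩
  set v := stdOrthonormalBasis ℝ α
  set w := stdOrthonormalBasis ℝ β
  have h1 : (volume : Measure (α × β)) = (v.toBasis.prod w.toBasis).addHaar := by
    rw [Module.Basis.prod_addHaar, v.addHaar_eq_volume, w.addHaar_eq_volume]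
    rfl
  have h2 : (volume : Measure (WithLp 2 (α × β))) = ((v.prod w).toBasis).addHaar :=
    ((v.prod w).addHaar_eq_volume).symm
  rw [h1, h2]
  have h3 : ((WithLp.equiv 2 (α × β)).symm : α × β → WithLp 2 (α × β)) = ⇑L.symm := rfl
  rw [h3, Module.Basis.map_addHaar _ L.symm]
  congr 1
  symm; show (v.prod w).toBasis = (v.toBasis.prod w.toBasis).map L.symm.toLinearEquiv
  rw [OrthonormalBasis.prod, Module.Basis.toBasis_toOrthonormalBasis]
  rfl

end mp

open scoped RealInnerProductSpace

section psi
variable {F : Type*} [NormedAddCommGroup F] [InnerProductSpace ℝ F] [FiniteDimensional ℝ F]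
  [MeasurableSpace F] [BorelSpace F] {m : ℕ}

lemma mp_psi (θ : F) (hθ : ‖θ‖ = 1)
    (e : EuclideanSpace ℝ (Fin m) ≃ₗᵢ[ℝ] (Submodule.span ℝ ({θ} : Set F))ᗮ) :
    MeasurePreserving
      (fun p : ℝ × EuclideanSpace ℝ (Fin m) =>
        p.1 • θ + ((e p.2 : (Submodule.span ℝ ({θ} : Set F))ᗮ) : F))
      volume volume := by
  classical
  have hθθ : ⟪θ, θ⟫ = 1 := by
    rw [real_inner_self_eq_norm_sq, hθ]; norm_num
  have horth : ∀ u : (Submodule.span ℝ ({θ} : Set F))ᗮ, ⟪(u : F), θ⟫ = 0 := by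
    intro u
    have h := u.2
    rw [Submodule.mem_orthogonal] at h
    have := h θ (Submodule.mem_span_singleton_self θ)
    rwa [real_inner_comm] at this
  have horth' : ∀ u : (Submodule.span ℝ ({θ} : Set F))ᗮ, ⟪θ, (u : F)⟫ = 0 := by
    intro u; rw [real_inner_comm]; exact horth u
  have hmem : ∀ x : F, x - ⟪x, θ⟫ • θ ∈ (Submodule.span ℝ ({θ} : Set F))ᗮ := by
    intro x
    rw [Submodule.mem_orthogonal]
    intro u hu
    obtain ⟨c, rfl⟩ := Submodule.mem_span_singleton.mp hu
    rw [inner_smul_left, inner_sub_right, inner_smul_right, hθθ, real_inner_comm θ x]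
    simp
  let L0 : WithLp 2 (ℝ × EuclideanSpace ℝ (Fin m)) →ₗ[ℝ] F :=
    { toFun := fun z => z.fst • θ + ((e z.snd : (Submodule.span ℝ ({θ} : Set F))ᗮ) : F)
      map_add' := by
        intro z z'
        show (z.fst + z'.fst) • θ + ((e (z.snd + z'.snd) : _) : F) = _
        rw [e.map_add, add_smul, Submodule.coe_add]
        abel
      map_smul' := by
        intro c z
        show (c * z.fst) • θ + ((e (c • z.snd) : _) : F) = _
        rw [e.map_smul, mul_smul, Submodule.coe_smul]
        show _ = c • (z.fst • θ + ((e z.snd : _) : F))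
        rw [smul_add] }
  have hinner : ∀ z z' : WithLp 2 (ℝ × EuclideanSpace ℝ (Fin m)),
      ⟪L0 z, L0 z'⟫ = ⟪z, z'⟫ := by
    intro z z'
    have hL : ⟪L0 z, L0 z'⟫ = z.fst * z'.fst + ⟪z.snd, z'.snd⟫ := by
      show ⟪z.fst • θ + ((e z.snd : _) : F), z'.fst • θ + ((e z'.snd : _) : F)⟫ = _
      simp only [inner_add_left, inner_add_right, real_inner_smul_left, real_inner_smul_right,
        hθθ, horth, horth', mul_zero, zero_add, add_zero, mul_one]
      rw [← Submodule.coe_inner, e.inner_map_map]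
      ring
    rw [hL, WithLp.prod_inner_apply]
    norm_num [RCLike.inner_apply]
    ring
  have hnorm : ∀ z : WithLp 2 (ℝ × EuclideanSpace ℝ (Fin m)), ‖L0 z‖ = ‖z‖ := by
    intro z
    rw [@norm_eq_sqrt_real_inner F, @norm_eq_sqrt_real_inner (WithLp 2 _), hinner z z]
  let Li : WithLp 2 (ℝ × EuclideanSpace ℝ (Fin m)) →ₗᵢ[ℝ] F := ⟨L0, hnorm⟩
  have hsurj : Function.Surjective Li := by
    intro x
    refine ⟨(WithLp.equiv 2 (ℝ × EuclideanSpace ℝ (Fin m))).symm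
      (⟪x, θ⟫, e.symm ⟨x - ⟪x, θ⟫ • θ, hmem x⟩), ?_⟩
    show ⟪x, θ⟫ • θ + ((e (e.symm ⟨x - ⟪x, θ⟫ • θ, hmem x⟩) : _) : F) = x
    rw [e.apply_symm_apply]
    simp
  let Φ := LinearIsometryEquiv.ofSurjective Li hsurj
  letI : MeasurableSpace (WithLp 2 (ℝ × EuclideanSpace ℝ (Fin m))) := borel _
  letI : BorelSpace (WithLp 2 (ℝ × EuclideanSpace ℝ (Fin m))) := ⟨rfl⟩
  haveI : FiniteDimensional ℝ (WithLp 2 (ℝ × EuclideanSpace ℝ (Fin m))) :=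
    (WithLp.linearEquiv 2 ℝ (ℝ × EuclideanSpace ℝ (Fin m))).symm.finiteDimensional
  have h := Φ.measurePreserving
  have hΦ : ⇑Φ = ⇑Li := rfl
  rw [hΦ] at h
  have hc := h.comp (mp_withLp_symm ℝ (EuclideanSpace ℝ (Fin m)))
  exact hc

end psi


set_option maxHeartbeats 1000000 in
/-- Gaussian approximation of the partial Radon transform. The hyperplane
`{x : x·θ = η}` is parametrized isometrically as `η•θ + e(y)`, `y ∈ ℝ^{n-1}`, where
`e : ℝ^{n-1} ≃ₗᵢ (ℝ∙θ)ᗮ`; the surface integral over the hyperplane is the integral of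
`y ↦ G(η•θ + e y, t₀)` over `ℝ^{n-1}`. There exists `C > 0`, depending only on the support
of `G`, such that for all `τ > 0`, `θ ∈ S^{n-1}`, `η ∈ ℝ`, the Gaussian-weighted space-time
integral approximates the Radon transform with error `(√π/2)·C·‖G‖_Lip·τ^{-1/2}`. -/
theorem stmt6 (n : ℕ) (hn : 1 ≤ n)
    (G : EuclideanSpace ℝ (Fin n) × ℝ → ℝ) (K : NNReal)
    (hGlip : LipschitzWith K G) (hGsupp : HasCompactSupport G) (t₀ : ℝ) :
    ∃ C : ℝ, 0 < C ∧ ∀ τ : ℝ, 0 < τ →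
      ∀ θ : EuclideanSpace ℝ (Fin n), ‖θ‖ = 1 → ∀ η : ℝ,
      ∀ e : EuclideanSpace ℝ (Fin (n - 1)) ≃ₗᵢ[ℝ]
          (Submodule.span ℝ ({θ} : Set (EuclideanSpace ℝ (Fin n))))ᗮ,
      |(∫ y : EuclideanSpace ℝ (Fin (n - 1)),
            G (η • θ + ((e y : (Submodule.span ℝ ({θ} : Set (EuclideanSpace ℝ (Fin n))))ᗮ)
              : EuclideanSpace ℝ (Fin n)), t₀))
        - (τ / Real.pi) *
            ∫ p : EuclideanSpace ℝ (Fin n) × ℝ,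
              G p * Real.exp (-τ * ((⟪p.1, θ⟫ - η) ^ 2 + (p.2 - t₀) ^ 2))|
        ≤ (Real.sqrt Real.pi / 2) * C * (K : ℝ) * τ ^ (-(1 : ℝ) / 2) := by
  classical
  obtain ⟨R, hR, hGR⟩ := hGsupp.exists_pos_le_norm
  have hvol_fin : volume (Metric.closedBall (0 : EuclideanSpace ℝ (Fin (n-1))) R) < ⊤ :=
    measure_closedBall_lt_top
  have hvol_pos : 0 < (volume (Metric.closedBall (0 : EuclideanSpace ℝ (Fin (n-1))) R)).toReal :=
    ENNReal.toReal_pos (Metric.measure_closedBall_pos volume 0 hR).ne' hvol_fin.ne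
  set V : ℝ := (volume (Metric.closedBall (0 : EuclideanSpace ℝ (Fin (n-1))) R)).toReal with hV
  have hπ : (0:ℝ) < π := pi_pos
  refine ⟨4 / π * V, by positivity, ?_⟩
  intro τ hτ θ hθ η e
  have hGc : Continuous G := hGlip.continuous
  set Ψ : ℝ × EuclideanSpace ℝ (Fin (n-1)) → EuclideanSpace ℝ (Fin n) :=
    fun p => p.1 • θ + ((e p.2 : (Submodule.span ℝ ({θ} : Set (EuclideanSpace ℝ (Fin n))))ᗮ)
      : EuclideanSpace ℝ (Fin n)) with hΨdef
  have hΨmp : MeasurePreserving Ψ volume volume := mp_psi θ hθ e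
  have hθθ : ⟪θ, θ⟫ = 1 := by rw [real_inner_self_eq_norm_sq, hθ]; norm_num
  have horth : ∀ u : (Submodule.span ℝ ({θ} : Set (EuclideanSpace ℝ (Fin n))))ᗮ,
      ⟪(u : EuclideanSpace ℝ (Fin n)), θ⟫ = 0 := by
    intro u
    have h := u.2
    rw [Submodule.mem_orthogonal] at h
    have := h θ (Submodule.mem_span_singleton_self θ)
    rwa [real_inner_comm] at this
  have horth' : ∀ u : (Submodule.span ℝ ({θ} : Set (EuclideanSpace ℝ (Fin n))))ᗮ,
      ⟪θ, (u : EuclideanSpace ℝ (Fin n))⟫ = 0 := by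
    intro u; rw [real_inner_comm]; exact horth u
  have hΨcont : Continuous Ψ := by
    apply Continuous.add
    · exact (continuous_fst).smul continuous_const
    · exact continuous_subtype_val.comp (e.continuous.comp continuous_snd)
  have hip : ∀ p : ℝ × EuclideanSpace ℝ (Fin (n-1)), ⟪Ψ p, θ⟫ = p.1 := by
    intro p
    rw [hΨdef]
    simp only []
    rw [inner_add_left, real_inner_smul_left, hθθ, horth (e p.2)]
    ring
  have hnormΨ : ∀ p : ℝ × EuclideanSpace ℝ (Fin (n-1)), ‖Ψ p‖^2 = p.1^2 + ‖p.2‖^2 := by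
    intro p
    rw [hΨdef]
    simp only []
    rw [@norm_add_sq_real, norm_smul, hθ, real_inner_smul_left, horth' (e p.2),
      ← Submodule.coe_norm, e.norm_map]
    simp [Real.norm_eq_abs, sq_abs]
  have hyle : ∀ p : ℝ × EuclideanSpace ℝ (Fin (n-1)), ‖p.2‖ ≤ ‖Ψ p‖ := by
    intro p
    have h2 : ‖p.2‖^2 ≤ ‖Ψ p‖^2 := by rw [hnormΨ]; nlinarith [sq_nonneg p.1]
    have := Real.sqrt_le_sqrt h2
    rwa [Real.sqrt_sq (norm_nonneg _), Real.sqrt_sq (norm_nonneg _)] at this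
  have hsle : ∀ p : ℝ × EuclideanSpace ℝ (Fin (n-1)), |p.1| ≤ ‖Ψ p‖ := by
    intro p
    have h2 : p.1^2 ≤ ‖Ψ p‖^2 := by rw [hnormΨ]; nlinarith [sq_nonneg ‖p.2‖]
    have := Real.sqrt_le_sqrt h2
    rwa [Real.sqrt_sq_eq_abs, Real.sqrt_sq (norm_nonneg _)] at this
  have hG0 : ∀ (x : EuclideanSpace ℝ (Fin n)) (t : ℝ), R ≤ ‖x‖ → G (x, t) = 0 := by
    intro x t hx
    refine hGR _ (le_trans hx ?_)
    rw [Prod.norm_def]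
    exact le_max_left _ _
  have hG0' : ∀ (x : EuclideanSpace ℝ (Fin n)) (t : ℝ), R ≤ |t| → G (x, t) = 0 := by
    intro x t ht
    refine hGR _ (le_trans ht ?_)
    rw [Prod.norm_def]
    exact le_max_right _ _
  -- 1D Gaussian integrals
  have hτ' : τ ≠ 0 := hτ.ne'
  have hg1 : (∫ s : ℝ, exp (-τ * (s - η)^2)) = Real.sqrt (π / τ) :=
    (integral_sub_right_eq_self (fun u : ℝ => exp (-τ * u^2)) η).trans (integral_gaussian τ)
  have hg1' : (∫ t : ℝ, exp (-τ * (t - t₀)^2)) = Real.sqrt (π / τ) :=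
    (integral_sub_right_eq_self (fun u : ℝ => exp (-τ * u^2)) t₀).trans (integral_gaussian τ)
  have hg2 : (∫ s : ℝ, |s - η| * exp (-τ * (s - η)^2)) = τ⁻¹ :=
    (integral_sub_right_eq_self (fun u : ℝ => |u| * exp (-τ * u^2)) η).trans (gauss_abs hτ)
  have hg2' : (∫ t : ℝ, |t - t₀| * exp (-τ * (t - t₀)^2)) = τ⁻¹ :=
    (integral_sub_right_eq_self (fun u : ℝ => |u| * exp (-τ * u^2)) t₀).trans (gauss_abs hτ)
  have hie1 : Integrable (fun s : ℝ => exp (-τ * (s - η)^2)) :=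
    (integrable_exp_neg_mul_sq hτ).comp_sub_right η
  have hie1' : Integrable (fun t : ℝ => exp (-τ * (t - t₀)^2)) :=
    (integrable_exp_neg_mul_sq hτ).comp_sub_right t₀
  have hie2 : Integrable (fun s : ℝ => |s - η| * exp (-τ * (s - η)^2)) :=
    (gauss_abs_integrable hτ).comp_sub_right η
  have hie2' : Integrable (fun t : ℝ => |t - t₀| * exp (-τ * (t - t₀)^2)) :=
    (gauss_abs_integrable hτ).comp_sub_right t₀
  -- weight
  set w2 : ℝ × ℝ → ℝ := fun q => exp (-τ * ((q.1 - η)^2 + (q.2 - t₀)^2)) with hw2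
  have hw2prod : ∀ q : ℝ × ℝ, w2 q = exp (-τ * (q.1 - η)^2) * exp (-τ * (q.2 - t₀)^2) := by
    intro q
    rw [hw2]
    simp only []
    rw [← Real.exp_add]
    ring_nf
  have hw2int : Integrable w2 := by
    refine (hie1.mul_prod hie1').congr ?_
    filter_upwards with q
    rw [hw2prod q]
  have hw2integral : ∫ q : ℝ × ℝ, w2 q = π / τ := by
    have : ∫ q : ℝ × ℝ, w2 q = ∫ q : ℝ × ℝ, exp (-τ * (q.1 - η)^2) * exp (-τ * (q.2 - t₀)^2) := by
      congr 1
      funext q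
      exact hw2prod q
    rw [this, Measure.volume_eq_prod,
      integral_prod_mul (fun s : ℝ => exp (-τ * (s - η)^2)) (fun t : ℝ => exp (-τ * (t - t₀)^2)),
      hg1, hg1', Real.mul_self_sqrt]
    positivity
  -- big integrand
  set g : EuclideanSpace ℝ (Fin n) × ℝ → ℝ :=
    fun p => G p * exp (-τ * ((⟪p.1, θ⟫ - η)^2 + (p.2 - t₀)^2)) with hgdef
  have hgc : Continuous g := by
    apply hGc.mul
    apply Real.continuous_exp.comp
    apply Continuous.mul continuous_const
    apply Continuous.add
    · exact ((continuous_fst.inner continuous_const).sub continuous_const).pow 2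
    · exact ((continuous_snd).sub continuous_const).pow 2
  have hgsupp : HasCompactSupport g := hGsupp.mul_right
  have hint_g : Integrable g := hgc.integrable_of_hasCompactSupport hgsupp
  set Θ : (ℝ × EuclideanSpace ℝ (Fin (n-1))) × ℝ → EuclideanSpace ℝ (Fin n) × ℝ :=
    fun z => (Ψ z.1, z.2) with hΘdef
  have hΘmp : MeasurePreserving Θ volume volume := by
    have := hΨmp.prod (MeasurePreserving.id (volume : Measure ℝ))
    exact this
  have hgm : AEStronglyMeasurable g (Measure.map Θ volume) := by
    rw [hΘmp.map_eq]; exact hint_g.1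
  set h : (ℝ × EuclideanSpace ℝ (Fin (n-1))) × ℝ → ℝ := fun z => g (Θ z) with hhdef
  have step1 : ∫ p, g p = ∫ z, h z := by
    calc ∫ p, g p = ∫ p, g p ∂(Measure.map Θ volume) := by rw [hΘmp.map_eq]
    _ = ∫ z, g (Θ z) := integral_map hΘmp.aemeasurable hgm
  have hint_h : Integrable h := (hΘmp.integrable_comp hint_g.1).mpr hint_g
  have hφ1int : Integrable (fun z : ℝ × EuclideanSpace ℝ (Fin (n-1)) => ∫ t, h (z, t)) :=
    hint_h.integral_prod_left
  have step2 : ∫ z, h z = ∫ y, ∫ s, ∫ t, h ((s, y), t) :=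
    (integral_prod h hint_h).trans (integral_prod_symm _ hφ1int)
  have hBint : Integrable (fun y => ∫ s, ∫ t, h ((s, y), t)) := hφ1int.integral_prod_right
  -- pointwise form of h
  have hrw : ∀ (y : EuclideanSpace ℝ (Fin (n-1))) (q : ℝ × ℝ),
      h ((q.1, y), q.2) = G (Ψ (q.1, y), q.2) * w2 q := by
    intro y q
    rw [hhdef]
    simp only []
    rw [hΘdef]
    simp only []
    rw [hgdef]
    simp only []
    rw [hip (q.1, y), hw2]
  -- integrability and value for fixed y
  have hΘcont : Continuous Θ := (hΨcont.comp continuous_fst).prodMk continuous_snd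
  have hFycont : ∀ y, Continuous (fun q : ℝ × ℝ => h ((q.1, y), q.2)) := by
    intro y
    exact (hgc.comp hΘcont).comp
      (((continuous_fst.prodMk continuous_const)).prodMk continuous_snd)
  have hFysupp : ∀ y, HasCompactSupport (fun q : ℝ × ℝ => h ((q.1, y), q.2)) := by
    intro y
    apply HasCompactSupport.intro (isCompact_closedBall (0 : ℝ × ℝ) R)
    intro q hq
    have hq' : R < ‖q‖ := by
      simp only [Metric.mem_closedBall, dist_zero_right, not_le] at hq
      exact hq
    rw [hrw]
    rw [Prod.norm_def] at hq'
    rcases lt_max_iff.1 hq' with h1 | h1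
    · have : R ≤ ‖Ψ (q.1, y)‖ := le_trans h1.le (by simpa [Real.norm_eq_abs] using hsle (q.1, y))
      rw [hG0 _ _ this, zero_mul]
    · have : R ≤ |q.2| := by simpa [Real.norm_eq_abs] using h1.le
      rw [hG0' _ _ this, zero_mul]
  have hFyint : ∀ y, Integrable (fun q : ℝ × ℝ => h ((q.1, y), q.2)) := fun y =>
    (hFycont y).integrable_of_hasCompactSupport (hFysupp y)
  have step3 : ∀ y, (∫ s, ∫ t, h ((s, y), t)) = ∫ q : ℝ × ℝ, h ((q.1, y), q.2) := by
    intro y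
    rw [Measure.volume_eq_prod]
    exact (integral_prod _ (hFyint y)).symm
  set A : EuclideanSpace ℝ (Fin (n-1)) → ℝ := fun y => G (Ψ (η, y), t₀) with hAdef
  have hAcont : Continuous A :=
    hGc.comp ((hΨcont.comp (continuous_const.prodMk continuous_id)).prodMk continuous_const)
  have hAsupp : HasCompactSupport A := by
    apply HasCompactSupport.intro (isCompact_closedBall (0 : EuclideanSpace ℝ (Fin (n-1))) R)
    intro y hy
    have hy' : R < ‖y‖ := by
      simp only [Metric.mem_closedBall, dist_zero_right, not_le] at hy; exact hy
    exact hG0 _ _ (le_trans hy'.le (by simpa using hyle (η, y)))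
  have hAint : Integrable A := hAcont.integrable_of_hasCompactSupport hAsupp
  set B : EuclideanSpace ℝ (Fin (n-1)) → ℝ := fun y => ∫ q : ℝ × ℝ, h ((q.1, y), q.2) with hBdef
  have hBint' : Integrable B := hBint.congr (by filter_upwards with y; exact step3 y)
  set c : ℝ := 2 / Real.sqrt π * (K : ℝ) * (Real.sqrt τ)⁻¹ with hc
  have hsπ : 0 < Real.sqrt π := Real.sqrt_pos.2 hπ
  have hsτ : 0 < Real.sqrt τ := Real.sqrt_pos.2 hτ
  have hππ : Real.sqrt π * Real.sqrt π = π := Real.mul_self_sqrt hπ.le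
  have hττ : Real.sqrt τ * Real.sqrt τ = τ := Real.mul_self_sqrt hτ.le
  have hcnn : 0 ≤ c := by positivity
  have key : ∀ y, |A y - (τ/π) * B y| ≤
      Set.indicator (Metric.closedBall (0 : EuclideanSpace ℝ (Fin (n-1))) R) (fun _ => c) y := by
    intro y
    by_cases hy : y ∈ Metric.closedBall (0 : EuclideanSpace ℝ (Fin (n-1))) R
    · rw [Set.indicator_of_mem hy]
      have hGint : Integrable (fun q : ℝ × ℝ => G (Ψ (q.1, y), q.2) * w2 q) :=
        (hFyint y).congr (by filter_upwards with q; rw [hrw])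
      have hdiff : A y - (τ/π) * B y
          = (τ/π) * ∫ q : ℝ × ℝ, (A y - G (Ψ (q.1, y), q.2)) * w2 q := by
        have h0 : (∫ q : ℝ × ℝ, (A y - G (Ψ (q.1, y), q.2)) * w2 q)
            = (∫ q : ℝ × ℝ, A y * w2 q) - ∫ q : ℝ × ℝ, G (Ψ (q.1, y), q.2) * w2 q := by
          rw [← integral_sub (hw2int.const_mul _) hGint]
          congr 1; funext q; ring
        have hconst : (∫ q : ℝ × ℝ, A y * w2 q) = A y * (π / τ) := by
          rw [integral_const_mul, hw2integral]
        have hB : B y = ∫ q : ℝ × ℝ, G (Ψ (q.1, y), q.2) * w2 q := by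
          calc B y = ∫ q : ℝ × ℝ, h ((q.1, y), q.2) := rfl
          _ = _ := by congr 1; funext q; rw [hrw]
        rw [h0, hconst, ← hB]
        field_simp
      rw [hdiff]
      have hbound : ∀ q : ℝ × ℝ, |(A y - G (Ψ (q.1, y), q.2)) * w2 q| ≤
          (K : ℝ) * ((|q.1 - η| * exp (-τ * (q.1 - η)^2)) * exp (-τ * (q.2 - t₀)^2)
            + exp (-τ * (q.1 - η)^2) * (|q.2 - t₀| * exp (-τ * (q.2 - t₀)^2))) := by
        intro q
        have hlip := hGlip.dist_le_mul (Ψ (η, y), t₀) (Ψ (q.1, y), q.2)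
        have hdist1 : dist (Ψ (η, y)) (Ψ (q.1, y)) = |η - q.1| := by
          rw [dist_eq_norm]
          have hsub : Ψ (η, y) - Ψ (q.1, y) = (η - q.1) • θ := by
            rw [hΨdef]; simp only []; rw [sub_smul]; abel
          rw [hsub, norm_smul, hθ, Real.norm_eq_abs, mul_one]
        have habs : |A y - G (Ψ (q.1, y), q.2)| ≤ (K : ℝ) * (|q.1 - η| + |q.2 - t₀|) := by
          calc |A y - G (Ψ (q.1, y), q.2)|
              = dist (G (Ψ (η, y), t₀)) (G (Ψ (q.1, y), q.2)) := (Real.dist_eq _ _).symm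
          _ ≤ (K : ℝ) * dist (Ψ (η, y), t₀) (Ψ (q.1, y), q.2) := hlip
          _ ≤ (K : ℝ) * (|q.1 - η| + |q.2 - t₀|) := by
              apply mul_le_mul_of_nonneg_left _ (NNReal.coe_nonneg K)
              rw [Prod.dist_eq, hdist1]
              apply max_le
              · rw [abs_sub_comm]
                exact le_add_of_nonneg_right (abs_nonneg _)
              · rw [Real.dist_eq, abs_sub_comm]
                exact le_add_of_nonneg_left (abs_nonneg _)
        calc |(A y - G (Ψ (q.1, y), q.2)) * w2 q|
            = |A y - G (Ψ (q.1, y), q.2)| * w2 q := by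
              rw [abs_mul, abs_of_pos (exp_pos _)]
        _ ≤ ((K : ℝ) * (|q.1 - η| + |q.2 - t₀|)) * w2 q :=
              mul_le_mul_of_nonneg_right habs (le_of_lt (exp_pos _))
        _ = (K : ℝ) * ((|q.1 - η| * exp (-τ * (q.1 - η)^2)) * exp (-τ * (q.2 - t₀)^2)
            + exp (-τ * (q.1 - η)^2) * (|q.2 - t₀| * exp (-τ * (q.2 - t₀)^2))) := by
              rw [hw2prod q]; ring
      have hmaj : Integrable (fun q : ℝ × ℝ =>
          (K : ℝ) * ((|q.1 - η| * exp (-τ * (q.1 - η)^2)) * exp (-τ * (q.2 - t₀)^2)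
            + exp (-τ * (q.1 - η)^2) * (|q.2 - t₀| * exp (-τ * (q.2 - t₀)^2)))) :=
        ((hie2.mul_prod hie1').add (hie1.mul_prod hie2')).const_mul _
      have hmajval : (∫ q : ℝ × ℝ,
          (K : ℝ) * ((|q.1 - η| * exp (-τ * (q.1 - η)^2)) * exp (-τ * (q.2 - t₀)^2)
            + exp (-τ * (q.1 - η)^2) * (|q.2 - t₀| * exp (-τ * (q.2 - t₀)^2))))
          = (K : ℝ) * (τ⁻¹ * Real.sqrt (π/τ) + Real.sqrt (π/τ) * τ⁻¹) := by
        rw [integral_const_mul]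
        congr 1
        rw [Measure.volume_eq_prod, integral_add (hie2.mul_prod hie1') (hie1.mul_prod hie2'),
          integral_prod_mul (fun s : ℝ => |s - η| * exp (-τ * (s - η)^2))
            (fun t : ℝ => exp (-τ * (t - t₀)^2)),
          integral_prod_mul (fun s : ℝ => exp (-τ * (s - η)^2))
            (fun t : ℝ => |t - t₀| * exp (-τ * (t - t₀)^2)),
          hg2, hg1, hg1', hg2']
      calc |(τ/π) * ∫ q : ℝ × ℝ, (A y - G (Ψ (q.1, y), q.2)) * w2 q|
          = (τ/π) * |∫ q : ℝ × ℝ, (A y - G (Ψ (q.1, y), q.2)) * w2 q| := by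
            rw [abs_mul, abs_of_pos (by positivity : (0:ℝ) < τ/π)]
      _ ≤ (τ/π) * ((K : ℝ) * (τ⁻¹ * Real.sqrt (π/τ) + Real.sqrt (π/τ) * τ⁻¹)) := by
            apply mul_le_mul_of_nonneg_left _ (by positivity)
            rw [← hmajval]
            have hn := norm_integral_le_of_norm_le hmaj
              (Filter.Eventually.of_forall (fun q => by
                rw [Real.norm_eq_abs]; exact hbound q))
            simpa [Real.norm_eq_abs] using hn
      _ = c := by
            rw [hc, Real.sqrt_div hπ.le, ← hππ]
            field_simp
            rw [Real.sq_sqrt (sq_nonneg (Real.sqrt π))]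
            rw [Real.sq_sqrt hπ.le]
            ring
    · rw [Set.indicator_of_notMem hy]
      have hy' : R < ‖y‖ := by
        simp only [Metric.mem_closedBall, dist_zero_right, not_le] at hy; exact hy
      have hA0 : A y = 0 := hG0 _ _ (le_trans hy'.le (by simpa using hyle (η, y)))
      have hB0 : B y = 0 := by
        rw [hBdef]
        have hz : ∀ q : ℝ × ℝ, h ((q.1, y), q.2) = 0 := by
          intro q
          rw [hrw, hG0 _ _ (le_trans hy'.le (by simpa using hyle (q.1, y))), zero_mul]
        simp [hz]
      rw [hA0, hB0]
      simp
  have hτpow : τ ^ (-(1:ℝ)/2) = (Real.sqrt τ)⁻¹ := by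
    rw [Real.sqrt_eq_rpow, ← Real.rpow_neg hτ.le]
    norm_num
  have hLHS : (∫ y : EuclideanSpace ℝ (Fin (n-1)),
        G (η • θ + ((e y : (Submodule.span ℝ ({θ} : Set (EuclideanSpace ℝ (Fin n))))ᗮ)
          : EuclideanSpace ℝ (Fin n)), t₀)) = ∫ y, A y := rfl
  have hsplit : (∫ y, A y) - (τ/π) * (∫ p, g p) = ∫ y, (A y - (τ/π) * B y) := by
    rw [step1, step2]
    have h1 : (∫ y, ∫ s, ∫ t, h ((s, y), t)) = ∫ y, B y := by
      congr 1; funext y; rw [step3 y]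
    rw [h1, ← integral_const_mul, ← integral_sub hAint (hBint'.const_mul _)]
  rw [hLHS, hsplit]
  have hind : Integrable (Set.indicator
      (Metric.closedBall (0 : EuclideanSpace ℝ (Fin (n-1))) R) (fun _ => c)) := by
    rw [integrable_indicator_iff measurableSet_closedBall]
    exact integrableOn_const hvol_fin.ne
  calc |∫ y, (A y - (τ/π) * B y)|
      ≤ ∫ y, Set.indicator (Metric.closedBall (0 : EuclideanSpace ℝ (Fin (n-1))) R)
          (fun _ => c) y := by
        have hn := norm_integral_le_of_norm_le hind
          (Filter.Eventually.of_forall (fun y => by rw [Real.norm_eq_abs]; exact key y))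
        simpa [Real.norm_eq_abs] using hn
  _ = V * c := by
        rw [integral_indicator_const c measurableSet_closedBall]
        simp [hV, smul_eq_mul, measureReal_def]
  _ = Real.sqrt π / 2 * (4 / π * V) * (K : ℝ) * τ ^ (-(1:ℝ)/2) := by
        rw [hτpow, hc, ← hππ]
        field_simp
        rw [Real.sq_sqrt (sq_nonneg (Real.sqrt π))]
        rw [Real.sq_sqrt hπ.le]
        ring
end
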